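/- Γ̃(R[x,y]) is complete if and only if Γ̃(R[x]) is complete. -/

import Mathlib

/-- x is a zero-divisor (including 0 in a nontrivial ring). -/
def IsZD {R : Type} [CommRing R] (x : R) : Prop := ∃ y : R, y ≠ 0 ∧ x * y = 0

/-- Adjacency relation of the graph Γ̃(R): xy = 0 or x + y ∈ Z(R). -/
def GTAdj {R : Type} [CommRing R] (x y : R) : Prop := x * y = 0 ∨ IsZD (x + y)

/-- Γ̃(R) is a complete graph: any two distinct nonzero zero-divisors are adjacent. -/
def GTComplete (R : Type) [CommRing R] : Prop :=
  ∀ x y : R, IsZD x → x ≠ 0 → IsZD y → y ≠ 0 → x ≠ y → GTAdj x y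

/-!
A zero-divisor of `S[X]` is killed by a nonzero constant (McCoy), so it stays a zero-divisor under
every evaluation; with the constant embedding this brings completeness of Γ̃ down from `R[x][y]`
to `R[x]`. Conversely, if Γ̃(R[x]) is complete, two zero-divisors `f, g` of `R[x]` with `fg ≠ 0`
are killed by a common nonzero constant: apply completeness to `f` and `g xⁿ` with `n > deg f`,
and McCoy to `f + g xⁿ`. The Kronecker substitution `y ↦ x^N`, with `N` larger than every
`x`-degree in sight, carries zero-divisors `F, G` of `R[x][y]` with `FG ≠ 0` to such `f, g`,
and is injective enough to pull the common annihilator back, so that it kills `F + G`.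
-/

open Polynomial

section

variable {S : Type} [CommRing S]

lemma isZD_iff_notMem_nonZeroDivisors {a : S} :
    IsZD a ↔ a ∉ nonZeroDivisors S := by
  simp only [IsZD, mem_nonZeroDivisors_iff_right, not_forall, exists_prop]
  exact exists_congr fun y => by rw [mul_comm, and_comm]

lemma IsZD.mul_right {a : S} (ha : IsZD a) (b : S) : IsZD (a * b) := by
  obtain ⟨y, hy, hay⟩ := ha
  exact ⟨y, hy, by rw [mul_right_comm, hay, zero_mul]⟩

lemma IsZD.map {T : Type} [CommRing T] {φ : S →+* T}
    (hφ : Function.Injective φ) {a : S} (ha : IsZD a) : IsZD (φ a) := by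
  obtain ⟨y, hy, hay⟩ := ha
  exact ⟨φ y, (map_ne_zero_iff φ hφ).2 hy, by rw [← map_mul, hay, map_zero]⟩

lemma IsZD.exists_C_mul_eq_zero {f : S[X]} (hf : IsZD f) :
    ∃ c : S, c ≠ 0 ∧ C c * f = 0 := by
  have hf' : f ∉ nonZeroDivisors S[X] := isZD_iff_notMem_nonZeroDivisors.1 hf
  obtain ⟨c, hc, hcf⟩ := Polynomial.notMem_nonZeroDivisors_iff.1 hf'
  exact ⟨c, hc, by rwa [← smul_eq_C_mul]⟩

lemma IsZD.eval {f : S[X]} (hf : IsZD f) (s : S) : IsZD (f.eval s) := by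
  obtain ⟨c, hc, hcf⟩ := hf.exists_C_mul_eq_zero
  exact ⟨c, hc, by rw [mul_comm, ← eval_C (a := c) (x := s), ← eval_mul, hcf, eval_zero]⟩

lemma GTComplete.of_polynomial (h : GTComplete S[X]) : GTComplete S := by
  intro f g hf hf0 hg hg0 hne
  rcases h (C f) (C g) (hf.map C_injective) (C_ne_zero.2 hf0) (hg.map C_injective)
      (C_ne_zero.2 hg0) (C_injective.ne hne) with hfg | hfg
  · exact .inl (by rwa [← C_mul, C_eq_zero] at hfg)
  · exact .inr (by simpa using (show IsZD (C (f + g)) by rwa [C_add]).eval 0)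

lemma eq_zero_of_add_mul_X_pow_eq_zero {p q : S[X]} {n : ℕ}
    (hp : p.natDegree < n) (h : p + q * X ^ n = 0) : q = 0 := by
  ext i
  have := congrArg (coeff · (i + n)) h
  simpa [coeff_mul_X_pow, coeff_eq_zero_of_natDegree_lt (show p.natDegree < i + n by omega)]
    using this

lemma GTComplete.exists_C_mul_eq_zero_and_C_mul_eq_zero
    (h : GTComplete S[X]) {f g : S[X]} (hf : IsZD f) (hg : IsZD g) (hfg : f * g ≠ 0) :
    ∃ c : S, c ≠ 0 ∧ C c * f = 0 ∧ C c * g = 0 := by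
  set n := f.natDegree + 1
  have hf0 : f ≠ 0 := left_ne_zero_of_mul hfg
  have hgX0 : g * X ^ n ≠ 0 := fun h0 => right_ne_zero_of_mul hfg (mul_X_pow_eq_zero h0)
  have hne : f ≠ g * X ^ n := fun heq =>
    right_ne_zero_of_mul hfg <| neg_eq_zero.1 <|
      eq_zero_of_add_mul_X_pow_eq_zero (q := -g) (n := n) (Nat.lt_succ_self _)
        (by rw [heq, neg_mul, add_neg_cancel])
  have hprod : f * (g * X ^ n) ≠ 0 := fun h0 =>
    hfg (mul_X_pow_eq_zero (by rwa [← mul_assoc] at h0))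
  rcases h f (g * X ^ n) hf hf0 (hg.mul_right _) hgX0 hne with h0 | hsum
  · exact absurd h0 hprod
  obtain ⟨c, hc, hcsum⟩ := hsum.exists_C_mul_eq_zero
  rw [mul_add, ← mul_assoc] at hcsum
  have hcg : C c * g = 0 := eq_zero_of_add_mul_X_pow_eq_zero
    ((natDegree_C_mul_le c f).trans_lt (Nat.lt_succ_self _)) hcsum
  exact ⟨c, hc, by rwa [hcg, zero_mul, add_zero] at hcsum, hcg⟩

lemma eventually_natDegree_coeff_lt (P : S[X][X]) :
    ∀ᶠ N in Filter.atTop, ∀ k, (P.coeff k).natDegree < N := by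
  refine Filter.eventually_atTop.2 ⟨P.support.sup (fun j => (P.coeff j).natDegree) + 1, ?_⟩
  intro N hN k
  by_cases hk : k ∈ P.support
  · exact (Finset.le_sup (f := fun j => (P.coeff j).natDegree) hk).trans_lt (by omega)
  · rw [notMem_support_iff.1 hk, natDegree_zero]
    omega

lemma coeff_eval_X_pow {P : S[X][X]} {N : ℕ}
    (hN : ∀ k, (P.coeff k).natDegree < N) (j : ℕ) {i : ℕ} (hi : i < N) :
    (P.eval (X ^ N)).coeff (N * j + i) = (P.coeff j).coeff i := by
  rw [eval_eq_sum, Polynomial.sum, finsetSum_coeff]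
  have hterm : ∀ e, (P.coeff e * (X ^ N) ^ e).coeff (N * j + i) =
      if e = j then (P.coeff j).coeff i else 0 := by
    intro e
    rw [← pow_mul, coeff_mul_X_pow']
    rcases lt_trichotomy e j with he | rfl | he
    · have : N * e + N ≤ N * j := by nlinarith
      rw [if_neg he.ne, if_pos (by omega)]
      exact coeff_eq_zero_of_natDegree_lt ((hN e).trans_le (by omega))
    · rw [if_pos rfl, if_pos (by omega), Nat.add_sub_cancel_left]
    · have : N * j + N ≤ N * e := by nlinarith
      rw [if_neg he.ne', if_neg (by omega)]
  rw [Finset.sum_eq_single j (fun e _ he => by rw [hterm, if_neg he]) (fun hj => by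
    rw [hterm, if_pos rfl, notMem_support_iff.1 hj, coeff_zero])]
  rw [hterm, if_pos rfl]

lemma eq_zero_of_eval_X_pow_eq_zero {P : S[X][X]} {N : ℕ}
    (hN : ∀ k, (P.coeff k).natDegree < N) (h : P.eval (X ^ N) = 0) : P = 0 := by
  ext j i
  rw [coeff_zero, coeff_zero]
  by_cases hi : i < N
  · rw [← coeff_eval_X_pow hN j hi, h, coeff_zero]
  · exact coeff_eq_zero_of_natDegree_lt ((hN j).trans_le (not_lt.1 hi))

lemma C_C_mul_eq_zero_of_C_mul_eval_X_pow_eq_zero {P : S[X][X]} {N : ℕ}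
    (hN : ∀ k, (P.coeff k).natDegree < N) {c : S} (h : C c * P.eval (X ^ N) = 0) :
    C (C c) * P = 0 := by
  refine eq_zero_of_eval_X_pow_eq_zero (fun k => ?_) (by rwa [eval_mul, eval_C])
  rw [coeff_C_mul]
  exact (natDegree_C_mul_le c _).trans_lt (hN k)

lemma GTComplete.polynomial_polynomial (h : GTComplete S[X]) :
    GTComplete S[X][X] := by
  intro F G hF _ hG _ _
  by_cases hFG : F * G = 0
  · exact .inl hFG
  obtain ⟨N, hNF, hNG, hNFG⟩ := ((eventually_natDegree_coeff_lt F).and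
    ((eventually_natDegree_coeff_lt G).and (eventually_natDegree_coeff_lt (F * G)))).exists
  have hfg : F.eval (X ^ N) * G.eval (X ^ N) ≠ 0 := fun h0 =>
    hFG (eq_zero_of_eval_X_pow_eq_zero hNFG (by rwa [eval_mul]))
  obtain ⟨c, hc, hcF, hcG⟩ :=
    h.exists_C_mul_eq_zero_and_C_mul_eq_zero (hF.eval _) (hG.eval _) hfg
  refine .inr ⟨C (C c), by simpa using hc, ?_⟩
  rw [mul_comm, mul_add, C_C_mul_eq_zero_of_C_mul_eval_X_pow_eq_zero hNF hcF,
    C_C_mul_eq_zero_of_C_mul_eval_X_pow_eq_zero hNG hcG, add_zero]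

end

theorem stmt7_general (R : Type) [CommRing R] :
    GTComplete (Polynomial (Polynomial R)) ↔ GTComplete (Polynomial R) :=
  ⟨GTComplete.of_polynomial, GTComplete.polynomial_polynomial⟩

theorem stmt7 (R : Type) [CommRing R] [Nontrivial R] :
    GTComplete (Polynomial (Polynomial R)) ↔ GTComplete (Polynomial R) :=
  stmt7_general R
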